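/- Let f : M^m → Q^n_ε × ℝ be a biconservative isometric immersion with nonzero parallel mean curvature vector field H, and suppose T and η are nowhere vanishing. Then A_H T = 0, i.e., T lies in the kernel E_0(H) of the shape operator in direction H. -/

import Mathlib

open scoped BigOperators

/-! Abstract model of an isometric immersion `f : M^m → Q^n_ε × ℝ ⊂ E^{n+2}`,
where `Q^n_ε` is the unit sphere (`ε = 1`) or hyperbolic space (`ε = -1`) and
`E^{n+2}` is Euclidean or Lorentzian space.  Here `R` plays the role of the ring
of smooth functions on `M`, `TM` of the tangent vector fields of `M`, `NM` of
the normal vector fields along `f` (normal inside `T(Q^n_ε × ℝ)`), and `AM` of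
the vector fields along `f` with values in `E^{n+2}`. -/

/-- The curvature tensor of the product `Q^n_ε × ℝ`:
`R̃(Z,W)V = ε (⟨W',V'⟩ Z' - ⟨Z',V'⟩ W')`, where `Z' = Z - ⟨Z,∂t⟩ ∂t` is the
component of `Z` tangent to the `Q^n_ε`-factor. -/
def prodCurv {R AM : Type*} [CommRing R] [Algebra ℝ R] [AddCommGroup AM] [Module R AM]
    (ε : ℝ) (g : AM →ₗ[R] AM →ₗ[R] R) (dt : AM) (Z W V : AM) : AM :=
  algebraMap ℝ R ε •
    ((g W V - g W dt * g V dt) • (Z - g Z dt • dt)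
      - (g Z V - g Z dt * g V dt) • (W - g W dt • dt))

structure Setup (ε : ℝ) (m : ℕ) (R : Type*) [CommRing R] [Algebra ℝ R]
    (TM NM AM : Type*) [AddCommGroup TM] [Module R TM]
    [AddCommGroup NM] [Module R NM] [AddCommGroup AM] [Module R AM] : Type _ where
  /-- the differential of `f` -/
  ι : TM →ₗ[R] AM
  /-- the inclusion of the normal bundle -/
  ν : NM →ₗ[R] AM
  /-- tangential projection -/
  tanPr : AM →ₗ[R] TM
  /-- normal projection -/
  norPr : AM →ₗ[R] NM
  split : ∀ Z, ι (tanPr Z) + ν (norPr Z) = Z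
  tan_ι : ∀ X, tanPr (ι X) = X
  nor_ν : ∀ ξ, norPr (ν ξ) = ξ
  nor_ι : ∀ X, norPr (ι X) = 0
  tan_ν : ∀ ξ, tanPr (ν ξ) = 0
  /-- the (possibly Lorentzian) metric of `E^{n+2}` along `f` -/
  g : AM →ₗ[R] AM →ₗ[R] R
  g_symm : ∀ Z W, g Z W = g W Z
  g_tan_nor : ∀ X ξ, g (ι X) (ν ξ) = 0
  /-- the action of a tangent vector field on a function -/
  act : TM → R → R
  act_add : ∀ X a b, act X (a + b) = act X a + act X b
  act_mul : ∀ X a b, act X (a * b) = a * act X b + b * act X a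
  act_const : ∀ X (r : ℝ), act X (algebraMap ℝ R r) = 0
  /-- the Lie bracket of vector fields on `M` -/
  bracket : TM → TM → TM
  /-- the Levi-Civita connection of `Q^n_ε × ℝ` along `f` -/
  D : TM → AM → AM
  D_add : ∀ X Z W, D X (Z + W) = D X Z + D X W
  D_smul : ∀ X (a : R) Z, D X (a • Z) = act X a • Z + a • D X Z
  /-- the Levi-Civita connection of `M` -/
  conn : TM → TM → TM
  conn_add : ∀ X Y Z, conn X (Y + Z) = conn X Y + conn X Z
  conn_smul : ∀ X (a : R) Y, conn X (a • Y) = act X a • Y + a • conn X Y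
  /-- the normal connection `∇^⊥` -/
  nconn : TM → NM → NM
  nconn_add : ∀ X ξ ζ, nconn X (ξ + ζ) = nconn X ξ + nconn X ζ
  nconn_smul : ∀ X (a : R) ξ, nconn X (a • ξ) = act X a • ξ + a • nconn X ξ
  /-- the second fundamental form `α_f` -/
  alpha : TM →ₗ[R] TM →ₗ[R] NM
  alpha_symm : ∀ X Y, alpha X Y = alpha Y X
  /-- the shape operators `A_ξ` -/
  A : NM →ₗ[R] TM →ₗ[R] TM
  shape : ∀ ξ X Y, g (ι (A ξ X)) (ι Y) = g (ν (alpha X Y)) (ν ξ)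
  /-- the Gauss formula -/
  gauss : ∀ X Y, D X (ι Y) = ι (conn X Y) + ν (alpha X Y)
  /-- the Weingarten formula -/
  weingarten : ∀ X ξ, D X (ν ξ) = - ι (A ξ X) + ν (nconn X ξ)
  metric : ∀ X Z W, act X (g Z W) = g (D X Z) W + g Z (D X W)
  torsion : ∀ X Y, conn X Y - conn Y X = bracket X Y
  /-- the Codazzi equation in `Q^n_ε × ℝ` -/
  codazzi : ∀ X Y Z,
    (nconn X (alpha Y Z) - alpha (conn X Y) Z - alpha Y (conn X Z))
      - (nconn Y (alpha X Z) - alpha (conn Y X) Z - alpha X (conn Y Z))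
      = norPr (prodCurv ε g dt (ι X) (ι Y) (ι Z))
  /-- the Ricci equation in `Q^n_ε × ℝ` -/
  ricci : ∀ X Y ξ,
    nconn X (nconn Y ξ) - nconn Y (nconn X ξ) - nconn (bracket X Y) ξ
      = norPr (prodCurv ε g dt (ι X) (ι Y) (ν ξ))
        + alpha X (A ξ Y) - alpha (A ξ X) Y
  /-- the unit vector field tangent to the `ℝ`-factor -/
  dt : AM
  dt_parallel : ∀ X, D X dt = 0
  dt_unit : g dt dt = 1
  /-- the position vector field, i.e. `f` itself, regarded in `E^{n+2}` -/
  pos : AM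
  /-- the flat connection `∇̂` of `E^{n+2}` along `f` -/
  Dhat : TM → AM → AM
  Dhat_add : ∀ X Z W, Dhat X (Z + W) = Dhat X Z + Dhat X W
  Dhat_smul : ∀ X (a : R) Z, Dhat X (a • Z) = act X a • Z + a • Dhat X Z
  Dhat_pos : ∀ X, Dhat X pos = ι X
  Dhat_dt : ∀ X, Dhat X dt = 0
  Dhat_metric : ∀ X Z W, act X (g Z W) = g (Dhat X Z) W + g Z (Dhat X W)
  /-- relation between `∇̂` and the connection of `Q^n_ε × ℝ` via the second
  fundamental form of the inclusion `Q^n_ε × ℝ ⊂ E^{n+2}` -/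
  Dhat_ι : ∀ X Y, Dhat X (ι Y) = D X (ι Y)
    - (algebraMap ℝ R ε * (g (ι X) (ι Y) - g (ι X) dt * g (ι Y) dt)) •
        (pos - g pos dt • dt)
  Dhat_ν : ∀ X ξ, Dhat X (ν ξ) = D X (ν ξ)
    - (algebraMap ℝ R ε * (g (ι X) (ν ξ) - g (ι X) dt * g (ν ξ) dt)) •
        (pos - g pos dt • dt)
  /-- `f` takes values in `Q^n_ε × ℝ` -/
  pos_norm : g (pos - g pos dt • dt) (pos - g pos dt • dt) = algebraMap ℝ R ε

namespace Setup

variable {ε : ℝ} {m : ℕ} {R TM NM AM : Type*} [CommRing R] [Algebra ℝ R]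
  [AddCommGroup TM] [Module R TM] [AddCommGroup NM] [Module R NM]
  [AddCommGroup AM] [Module R AM]

variable (S : Setup ε m R TM NM AM)

/-- the tangent part `T` of `∂t`, so that `∂t = f_* T + η` -/
def T : TM := S.tanPr S.dt

/-- the normal part `η` of `∂t`, so that `∂t = f_* T + η` -/
def eta : NM := S.norPr S.dt

/-- the induced metric on `M` -/
def gT (X Y : TM) : R := S.g (S.ι X) (S.ι Y)

/-- the metric of the normal bundle -/
def gN (ξ ζ : NM) : R := S.g (S.ν ξ) (S.ν ζ)

/-- the curvature tensor `R̃` of `Q^n_ε × ℝ` along `f` -/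
def Rcurv (Z W V : AM) : AM := prodCurv ε S.g S.dt Z W V

/-- `e` is a (local) orthonormal tangent frame of `M` -/
def IsONFrame (e : Fin m → TM) : Prop :=
  (∀ i j, S.gT (e i) (e j) = if i = j then 1 else 0) ∧
  (∀ X : TM, X = ∑ i, S.gT X (e i) • e i)

/-- `H` is the mean curvature vector field: `m H = trace α_f` -/
def IsMeanCurv (e : Fin m → TM) (H : NM) : Prop :=
  (m : R) • H = ∑ i, S.alpha (e i) (e i)

/-- `H` is parallel in the normal bundle -/
def IsParallelN (H : NM) : Prop := ∀ X, S.nconn X H = 0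

/-- `f` is biconservative: the tangent part of the bitension field vanishes,
i.e. `m grad‖H‖² + 4 trace A_{∇^⊥H} + 4 trace (R̃(·,H)·)^T = 0` (paired with an
arbitrary tangent field `Y`, which expresses the gradient term weakly). -/
def Biconservative (e : Fin m → TM) (H : NM) : Prop :=
  ∀ Y : TM,
    (m : R) * S.act Y (S.gN H H)
      + 4 * (∑ i, S.gT (S.A (S.nconn (e i) H) (e i)) Y)
      + 4 * (∑ i, S.gT (S.tanPr (S.Rcurv (S.ι (e i)) (S.ν H) (S.ι (e i)))) Y) = 0

/-- the normal part of the bitension field vanishes: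
`trace α_f(A_H ·, ·) - Δ^⊥ H + 2 trace (R̃(·,H)·)^⊥ = 0` -/
def NormalBitensionZero (e : Fin m → TM) (H : NM) : Prop :=
  (∑ i, S.alpha (S.A H (e i)) (e i))
    - (∑ i, (S.nconn (e i) (S.nconn (e i) H) - S.nconn (S.conn (e i) (e i)) H))
    + 2 • (∑ i, S.norPr (S.Rcurv (S.ι (e i)) (S.ν H) (S.ι (e i)))) = 0

/-- `f` is biharmonic: the full bitension field vanishes. -/
def Biharmonic (e : Fin m → TM) (H : NM) : Prop :=
  S.Biconservative e H ∧ S.NormalBitensionZero e H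

/-- a vector field is nowhere vanishing (in the function-ring model: it is not
annihilated by any nonzero function) -/
def NowhereZero (_S₀ : Setup ε m R TM NM AM) (X : TM) : Prop :=
  ∀ a : R, a • X = 0 → a = 0

/-- a normal field is nowhere vanishing -/
def NowhereZeroN (_S₀ : Setup ε m R TM NM AM) (ξ : NM) : Prop :=
  ∀ a : R, a • ξ = 0 → a = 0

/-- `f` belongs to the class `𝒜`: `T` is an eigenvector of every shape
operator of `f` -/
def ClassA : Prop := ∀ ξ : NM, ∃ r : R, S.A ξ S.T = r • S.T

end Setup

/-- The symmetric bilinear form of `E⁶` (Euclidean for `ε = 1`, Lorentzian for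
`ε = -1`), the last coordinate corresponding to the `ℝ`-factor of `Q⁴_ε × ℝ`. -/
def bform (ε : ℝ) (v w : Fin 6 → ℝ) : ℝ :=
  v 0 * w 0 + v 1 * w 1 + v 2 * w 2 + v 3 * w 3 + ε * (v 4 * w 4) + v 5 * w 5

/-! Since `∇^⊥H = 0`, the terms `grad ‖H‖²` and `trace A_{∇^⊥H}` of the biconservativity
equation vanish, and what is left is its curvature term `4ε(m-1)⟨H,∂t⟩ T`. As `T` vanishes
nowhere, `⟨H,∂t⟩ = 0` when `m ≠ 1`. Differentiating `⟨H,∂t⟩ = 0` with the Weingarten formula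
and `∇̃∂t = 0` gives `⟨A_H X, T⟩ = 0` for every `X`, that is `A_H T = 0`.
For `m = 1` the curvature term is zero, but here `⟨H,∂t⟩ = e₁⟨e₁,∂t⟩` and `⟨e₁,∂t⟩² = 1`,
so `⟨H,∂t⟩ = 0` again. -/

theorem eq_zero_of_algebraMap_mul_eq_zero {R : Type*} [CommRing R] [Algebra ℝ R] {r : ℝ}
    (hr : r ≠ 0) {a : R} (h : algebraMap ℝ R r * a = 0) : a = 0 :=
  ((isUnit_iff_ne_zero.mpr hr).map (algebraMap ℝ R)).mul_right_eq_zero.mp h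

theorem eq_zero_of_two_mul_eq_zero {R : Type*} [CommRing R] [Algebra ℝ R] {a : R}
    (h : 2 * a = 0) : a = 0 :=
  eq_zero_of_algebraMap_mul_eq_zero (r := 2) two_ne_zero (by rwa [map_ofNat])

namespace Setup

variable {ε : ℝ} {m : ℕ} {R TM NM AM : Type*} [CommRing R] [Algebra ℝ R]
  [AddCommGroup TM] [Module R TM] [AddCommGroup NM] [Module R NM]
  [AddCommGroup AM] [Module R AM]
  (S : Setup ε m R TM NM AM) {e : Fin m → TM} {H : NM}

theorem act_zero (X : TM) : S.act X 0 = 0 := by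
  simpa using S.act_const X 0

theorem act_one (X : TM) : S.act X 1 = 0 := by
  simpa using S.act_const X 1

theorem g_nor_tan (ξ : NM) (X : TM) : S.g (S.ν ξ) (S.ι X) = 0 := by
  rw [S.g_symm]; exact S.g_tan_nor X ξ

theorem g_ι_dt (X : TM) : S.g (S.ι X) S.dt = S.gT X S.T := by
  conv_lhs => rw [← S.split S.dt]
  rw [map_add, S.g_tan_nor, add_zero]; rfl

theorem gT_comm (X Y : TM) : S.gT X Y = S.gT Y X := S.g_symm _ _

theorem gT_A_comm (ξ : NM) (X Y : TM) : S.gT (S.A ξ X) Y = S.gT (S.A ξ Y) X := by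
  simp only [gT, S.shape, S.alpha_symm]

theorem gT_smul_left (a : R) (X Y : TM) : S.gT (a • X) Y = a * S.gT X Y := by
  simp only [gT, map_smul, LinearMap.smul_apply, smul_eq_mul]

theorem tanPr_Rcurv (X : TM) (ξ : NM) :
    S.tanPr (S.Rcurv (S.ι X) (S.ν ξ) (S.ι X))
      = (algebraMap ℝ R ε * S.g (S.ν ξ) S.dt) • (S.gT X X • S.T - S.g (S.ι X) S.dt • X) := by
  simp only [Rcurv, prodCurv, map_smul, map_sub, S.tan_ι, S.tan_ν, S.g_nor_tan]
  change _ • (_ • (X - _ • S.T) - _ • (0 - _ • S.T)) = _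
  rw [gT]
  module

theorem act_gT_self (X Y : TM) : S.act X (S.gT Y Y) = 2 * S.gT (S.conn X Y) Y := by
  rw [gT, S.metric, S.gauss, map_add, LinearMap.add_apply, S.g_nor_tan, S.g_symm (S.ι Y),
    map_add, LinearMap.add_apply, S.g_nor_tan, gT]
  ring

theorem act_g_ι_dt (X Y : TM) :
    S.act X (S.g (S.ι Y) S.dt) = S.g (S.ι (S.conn X Y)) S.dt + S.g (S.ν (S.alpha X Y)) S.dt := by
  rw [S.metric, S.gauss, S.dt_parallel, map_zero, add_zero, map_add, LinearMap.add_apply]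

/-- the component of the position vector in the factor `E^{n+1} ⊃ Q^n_ε` -/
def posQ : AM := S.pos - S.g S.pos S.dt • S.dt

theorem g_dt_posQ : S.g S.dt S.posQ = 0 := by
  simp only [posQ, map_sub, map_smul, smul_eq_mul, S.dt_unit, S.g_symm S.dt S.pos, mul_one,
    sub_self]

theorem Dhat_posQ (X : TM) : S.Dhat X S.posQ = S.ι X - S.g (S.ι X) S.dt • S.dt := by
  have hs : S.act X (S.g S.pos S.dt) = S.g (S.ι X) S.dt := by
    simpa [S.Dhat_pos, S.Dhat_dt] using S.Dhat_metric X S.pos S.dt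
  have h := S.Dhat_add X S.posQ (S.g S.pos S.dt • S.dt)
  rw [posQ, sub_add_cancel, S.Dhat_pos, S.Dhat_smul, S.Dhat_dt, smul_zero, add_zero, hs] at h
  exact eq_sub_of_add_eq h.symm

theorem g_ι_posQ (X : TM) : S.g (S.ι X) S.posQ = 0 := by
  have h := S.Dhat_metric X S.posQ S.posQ
  rw [posQ, S.pos_norm, S.act_const, ← posQ, Dhat_posQ, S.g_symm S.posQ] at h
  simp only [map_sub, map_smul, LinearMap.sub_apply, LinearMap.smul_apply, smul_eq_mul,
    g_dt_posQ] at h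
  exact eq_zero_of_two_mul_eq_zero (by linear_combination -h)

theorem g_posQ_ν_norPr : S.g S.posQ (S.ν (S.norPr S.posQ)) = algebraMap ℝ R ε := by
  have h := congrArg (S.g S.posQ) (S.split S.posQ)
  rwa [map_add, S.g_symm S.posQ (S.ι _), g_ι_posQ, zero_add, posQ, S.pos_norm] at h

/- Every vector along `f` splits into tangent and normal parts, so `posQ` has a normal part `q`
with `⟨posQ, q⟩ = ε`; comparing `D` and `∇̂` on `⟨Y, q⟩` forces the induced metric to be
`⟨·,∂t⟩ ⊗ ⟨·,∂t⟩`. -/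
theorem gT_eq_g_dt_mul_g_dt (hε : ε ≠ 0) (X Y : TM) :
    S.gT X Y = S.g (S.ι X) S.dt * S.g (S.ι Y) S.dt := by
  have h := (S.metric X (S.ι Y) (S.ν (S.norPr S.posQ))).symm.trans
    (S.Dhat_metric X (S.ι Y) (S.ν (S.norPr S.posQ)))
  rw [S.Dhat_ι, S.Dhat_ν, ← posQ] at h
  simp only [map_sub, map_smul, LinearMap.sub_apply, LinearMap.smul_apply, smul_eq_mul,
    g_posQ_ν_norPr, g_ι_posQ] at h
  refine sub_eq_zero.mp (eq_zero_of_algebraMap_mul_eq_zero (mul_ne_zero hε hε) ?_)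
  rw [map_mul, gT]
  linear_combination h

variable {S}

theorem IsONFrame.gT_self (he : S.IsONFrame e) (i : Fin m) : S.gT (e i) (e i) = 1 := by
  simpa using he.1 i i

theorem IsONFrame.gT_eq_sum (he : S.IsONFrame e) (X Y : TM) :
    S.gT X Y = ∑ i, S.gT X (e i) * S.gT (e i) Y := by
  conv_lhs => rw [he.2 X]
  simp only [gT, map_sum, map_smul, LinearMap.sum_apply, LinearMap.smul_apply, smul_eq_mul]

theorem IsONFrame.eq_zero_of_forall_gT (he : S.IsONFrame e) {X : TM}
    (h : ∀ i, S.gT X (e i) = 0) : X = 0 := by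
  rw [he.2 X]
  exact Finset.sum_eq_zero fun i _ => by rw [h i, zero_smul]

theorem act_gN_self_eq_zero (hpar : S.IsParallelN H) (X : TM) : S.act X (S.gN H H) = 0 := by
  simp only [gN, S.metric, S.weingarten, hpar X, map_zero, add_zero, map_neg,
    LinearMap.neg_apply, S.g_tan_nor, S.g_nor_tan, neg_zero]

theorem gT_A_T_eq_zero (hpar : S.IsParallelN H) (h0 : S.g (S.ν H) S.dt = 0) (X : TM) :
    S.gT (S.A H X) S.T = 0 := by
  have h := S.metric X (S.ν H) S.dt
  rw [h0, act_zero, S.dt_parallel, S.weingarten, hpar X, map_zero, add_zero, map_zero,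
    add_zero, map_neg, LinearMap.neg_apply, g_ι_dt] at h
  exact neg_eq_zero.mp h.symm

theorem A_T_eq_zero (he : S.IsONFrame e) (hpar : S.IsParallelN H)
    (h0 : S.g (S.ν H) S.dt = 0) : S.A H S.T = 0 :=
  he.eq_zero_of_forall_gT fun i => by rw [gT_A_comm]; exact gT_A_T_eq_zero hpar h0 (e i)

theorem IsONFrame.sum_gT_tanPr_Rcurv (he : S.IsONFrame e) (ξ : NM) (Y : TM) :
    ∑ i, S.gT (S.tanPr (S.Rcurv (S.ι (e i)) (S.ν ξ) (S.ι (e i)))) Y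
      = algebraMap ℝ R ε * S.g (S.ν ξ) S.dt * ((m - 1) * S.gT S.T Y) := by
  have hi : ∀ i, S.gT (S.tanPr (S.Rcurv (S.ι (e i)) (S.ν ξ) (S.ι (e i)))) Y
      = algebraMap ℝ R ε * S.g (S.ν ξ) S.dt
          * (S.gT S.T Y - S.gT S.T (e i) * S.gT (e i) Y) := by
    intro i
    rw [tanPr_Rcurv, he.gT_self, one_smul, gT_smul_left, g_ι_dt, S.gT_comm (e i)]
    simp only [gT, map_sub, map_smul, LinearMap.sub_apply, LinearMap.smul_apply, smul_eq_mul]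
  rw [Finset.sum_congr rfl fun i _ => hi i, ← Finset.mul_sum, Finset.sum_sub_distrib,
    ← he.gT_eq_sum, Finset.sum_const, Finset.card_univ, Fintype.card_fin, nsmul_eq_mul]
  ring

theorem g_ν_dt_eq_zero_of_biconservative (hm : m ≠ 1) (hε : ε ≠ 0) (he : S.IsONFrame e)
    (hpar : S.IsParallelN H) (hbic : S.Biconservative e H) (hT : S.NowhereZero S.T) :
    S.g (S.ν H) S.dt = 0 := by
  have hY : ∀ Y, (algebraMap ℝ R (4 * ε * (m - 1)) * S.g (S.ν H) S.dt) * S.gT S.T Y = 0 := by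
    intro Y
    have hA : ∑ i, S.gT (S.A (S.nconn (e i) H) (e i)) Y = 0 :=
      Finset.sum_eq_zero fun i _ => by simp [hpar (e i), gT]
    have h := hbic Y
    rw [act_gN_self_eq_zero hpar, hA, he.sum_gT_tanPr_Rcurv] at h
    simp only [map_mul, map_sub, map_natCast, map_one, map_ofNat]
    linear_combination h
  have hcT := hT _ (he.eq_zero_of_forall_gT fun i => by rw [gT_smul_left, hY])
  have hc : 4 * ε * ((m : ℝ) - 1) ≠ 0 :=
    mul_ne_zero (mul_ne_zero four_ne_zero hε) (sub_ne_zero.mpr (by exact_mod_cast hm))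
  exact eq_zero_of_algebraMap_mul_eq_zero hc hcT

theorem g_ν_dt_eq_zero_of_dim_eq_one (hm : m = 1) (hε : ε ≠ 0) (he : S.IsONFrame e)
    (hH : S.IsMeanCurv e H) : S.g (S.ν H) S.dt = 0 := by
  subst hm
  set t := S.g (S.ι (e 0)) S.dt
  have ht : t * t = 1 := by rw [← S.gT_eq_g_dt_mul_g_dt hε, he.gT_self]
  have hconn : S.conn (e 0) (e 0) = 0 := he.eq_zero_of_forall_gT fun i => by
    rw [Subsingleton.elim i 0]
    exact eq_zero_of_two_mul_eq_zero (by rw [← act_gT_self, he.gT_self, act_one])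
  have hα : S.alpha (e 0) (e 0) = H := by simpa using hH.symm
  have hderiv : S.act (e 0) t = S.g (S.ν H) S.dt := by
    rw [act_g_ι_dt, hconn, hα, map_zero, map_zero, LinearMap.zero_apply, zero_add]
  have h2 : 2 * (t * S.act (e 0) t) = 0 := by
    have h := S.act_mul (e 0) t t
    rw [ht, act_one] at h
    linear_combination -h
  calc S.g (S.ν H) S.dt = t * t * S.act (e 0) t := by rw [ht, one_mul, hderiv]
    _ = t * (t * S.act (e 0) t) := by ring
    _ = 0 := by rw [eq_zero_of_two_mul_eq_zero h2, mul_zero]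

end Setup

theorem stmt_4_general {ε : ℝ} (hε : ε = 1 ∨ ε = -1) {m : ℕ} {R TM NM AM : Type*}
    [CommRing R] [Algebra ℝ R] [AddCommGroup TM] [Module R TM]
    [AddCommGroup NM] [Module R NM] [AddCommGroup AM] [Module R AM]
    (S : Setup ε m R TM NM AM)
    (e : Fin m → TM) (H : NM) (he : S.IsONFrame e) (hH : S.IsMeanCurv e H)
    (hpar : S.IsParallelN H)
    (hbic : S.Biconservative e H) (hT : S.NowhereZero S.T) :
    S.A H S.T = 0 := by
  have hε0 : ε ≠ 0 := by rcases hε with rfl | rfl <;> norm_num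
  have hdt : S.g (S.ν H) S.dt = 0 := by
    rcases eq_or_ne m 1 with hm | hm
    · exact Setup.g_ν_dt_eq_zero_of_dim_eq_one hm hε0 he hH
    · exact Setup.g_ν_dt_eq_zero_of_biconservative hm hε0 he hpar hbic hT
  exact Setup.A_T_eq_zero he hpar hdt

/-- If `f` is biconservative with nonzero parallel `H` and `T`, `η` are nowhere
vanishing, then `A_H T = 0`, i.e. `T ∈ E_0(H)`. -/
theorem stmt_4 {ε : ℝ} (hε : ε = 1 ∨ ε = -1) {m : ℕ} {R TM NM AM : Type*}
    [CommRing R] [Algebra ℝ R] [AddCommGroup TM] [Module R TM]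
    [AddCommGroup NM] [Module R NM] [AddCommGroup AM] [Module R AM]
    (S : Setup ε m R TM NM AM)
    (e : Fin m → TM) (H : NM) (he : S.IsONFrame e) (hH : S.IsMeanCurv e H)
    (hpar : S.IsParallelN H) (hH0 : H ≠ 0)
    (hbic : S.Biconservative e H) (hT : S.NowhereZero S.T)
    (heta : S.NowhereZeroN S.eta) :
    S.A H S.T = 0 :=
  stmt_4_general hε S e H he hH hpar hbic hT
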